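/- For classical relations D1 on R1, D2 on R2, D3 on R3, D4 on R4, Darwen's Divide (D1 ⋈ D2) ⊼ ((D1 ⋈ D4) ⊼ D3) equals { r1r2 ∈ D1 ⋈ D2 | for all r4 ∈ D4 : if r1r2 ≬ r4, then there exists r3 ∈ D3 with r1r4 ≬ r3 }. -/
import Mathlib


section Tuples

variable {A : Type} {V : A → Type}

/-- Tuples on relation scheme `R`: functions assigning to each attribute of `R`
a value of its type. -/
def Tupl (V : A → Type) (R : Set A) : Type := ∀ a : R, V a

/-- Projection (restriction) of a tuple on `R` onto a subscheme `S ⊆ R`. -/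
def tRestrict {R S : Set A} (h : S ⊆ R) (r : Tupl V R) : Tupl V S :=
  fun a => r ⟨a.1, h a.2⟩

/-- Two tuples are joinable iff they agree on the common attributes. -/
def Joinable {R1 R2 : Set A} (r1 : Tupl V R1) (r2 : Tupl V R2) : Prop :=
  ∀ (a : A) (h1 : a ∈ R1) (h2 : a ∈ R2), r1 ⟨a, h1⟩ = r2 ⟨a, h2⟩

-- The join `r1 r2` of two tuples, a tuple on `R1 ∪ R2`.
open Classical in
noncomputable def tJoin {R1 R2 : Set A} (r1 : Tupl V R1) (r2 : Tupl V R2) :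
    Tupl V (R1 ∪ R2) := fun a =>
  if h : a.1 ∈ R1 then r1 ⟨a.1, h⟩ else r2 ⟨a.1, a.2.resolve_left h⟩

/-- Natural join of classical relations. -/
def njoin {R1 R2 : Set A} (D1 : Set (Tupl V R1)) (D2 : Set (Tupl V R2)) :
    Set (Tupl V (R1 ∪ R2)) :=
  { t | ∃ r1 ∈ D1, ∃ r2 ∈ D2, Joinable r1 r2 ∧ t = tJoin r1 r2 }

/-- Projection of a classical relation on `R` onto `S ⊆ R`. -/
def rproj {R : Set A} (S : Set A) (h : S ⊆ R) (D : Set (Tupl V R)) :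
    Set (Tupl V S) :=
  { s | ∃ r ∈ D, s = tRestrict h r }

/-- Semidifference: `D1 ⊼ D2 = D1 \ π_{R1}(D1 ⋈ D2)`. -/
def semidiff {R1 R2 : Set A} (D1 : Set (Tupl V R1)) (D2 : Set (Tupl V R2)) :
    Set (Tupl V R1) :=
  D1 \ rproj R1 Set.subset_union_left (njoin D1 D2)

end Tuples

section Aux

variable {A : Type} {V : A → Type}

lemma tJoin_left {R1 R2 : Set A} (r1 : Tupl V R1) (r2 : Tupl V R2)
    (a : A) (h1 : a ∈ R1) (ha : a ∈ R1 ∪ R2) :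
    tJoin r1 r2 ⟨a, ha⟩ = r1 ⟨a, h1⟩ := dif_pos h1

lemma tJoin_right {R1 R2 : Set A} {r1 : Tupl V R1} {r2 : Tupl V R2}
    (hj : Joinable r1 r2) (a : A) (h2 : a ∈ R2) (ha : a ∈ R1 ∪ R2) :
    tJoin r1 r2 ⟨a, ha⟩ = r2 ⟨a, h2⟩ := by
  unfold tJoin; dsimp only
  split_ifs with h1
  · exact hj a h1 h2
  · rfl

lemma restrict_join {R1 R2 : Set A} (r1 : Tupl V R1) (r2 : Tupl V R2) :
    tRestrict Set.subset_union_left (tJoin r1 r2) = r1 :=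
  funext fun ⟨a, h⟩ => dif_pos h

lemma mem_semidiff {R1 R2 : Set A} {D1 : Set (Tupl V R1)} {D2 : Set (Tupl V R2)}
    {t : Tupl V R1} :
    t ∈ semidiff D1 D2 ↔ t ∈ D1 ∧ ∀ t' ∈ D2, ¬ Joinable t t' := by
  constructor
  · rintro ⟨h1, h2⟩
    exact ⟨h1, fun t' ht' hj =>
      h2 ⟨tJoin t t', ⟨t, h1, t', ht', hj, rfl⟩, (restrict_join t t').symm⟩⟩
  · rintro ⟨h1, h2⟩
    refine ⟨h1, ?_⟩
    rintro ⟨_, ⟨r, hr, r', hr', hj, rfl⟩, rfl⟩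
    exact h2 r' hr' (by rw [restrict_join]; exact hj)

end Aux

/-- Darwen's Divide `(D1 ⋈ D2) ⊼ ((D1 ⋈ D4) ⊼ D3)` in set
notation. -/
theorem stmt14 {A : Type} {V : A → Type} (R1 R2 R3 R4 : Set A)
    (D1 : Set (Tupl V R1)) (D2 : Set (Tupl V R2))
    (D3 : Set (Tupl V R3)) (D4 : Set (Tupl V R4)) :
    semidiff (njoin D1 D2) (semidiff (njoin D1 D4) D3) =
      { t : Tupl V (R1 ∪ R2) | t ∈ njoin D1 D2 ∧
          ∀ r4 ∈ D4, Joinable t r4 →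
            ∃ r3 ∈ D3, Joinable (tJoin (tRestrict Set.subset_union_left t) r4) r3 } := by
  ext t
  rw [Set.mem_setOf_eq, mem_semidiff]
  constructor
  · rintro ⟨ht, hforb⟩
    refine ⟨ht, fun r4 hr4 hj => ?_⟩
    obtain ⟨q1, hq1, q2, _, _, rfl⟩ := ht
    set p1 := tRestrict (Set.subset_union_left : R1 ⊆ R1 ∪ R2) (tJoin q1 q2) with hp1
    have hp1q1 : p1 = q1 := restrict_join q1 q2
    have hp1D1 : p1 ∈ D1 := hp1q1 ▸ hq1
    have hp1r4 : Joinable p1 r4 := fun a h1 h4 => hj a (Or.inl h1) h4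
    have hu : tJoin p1 r4 ∈ njoin D1 D4 := ⟨p1, hp1D1, r4, hr4, hp1r4, rfl⟩
    have htu : Joinable (tJoin q1 q2) (tJoin p1 r4) := by
      intro a h12 h14
      by_cases h1 : a ∈ R1
      · rw [tJoin_left q1 q2 a h1 h12, tJoin_left p1 r4 a h1 h14, hp1q1]
      · rw [tJoin_right hp1r4 a (h14.resolve_left h1) h14]
        exact hj a h12 (h14.resolve_left h1)
    by_contra hno
    push_neg at hno
    exact hforb (tJoin p1 r4) (mem_semidiff.mpr ⟨hu, fun r3 hr3 hj3 =>
      hno r3 hr3 hj3⟩) htu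
  · rintro ⟨ht, hdiv⟩
    refine ⟨ht, ?_⟩
    intro s hs hts
    rw [mem_semidiff] at hs
    obtain ⟨⟨r1', hr1', r4, hr4, hjr, rfl⟩, hs2⟩ := hs
    have htr4 : Joinable t r4 := fun a h12 h4 =>
      (hts a h12 (Or.inr h4)).trans (tJoin_right hjr a h4 _)
    obtain ⟨r3, hr3, hj3⟩ := hdiv r4 hr4 htr4
    have hkey : tRestrict (Set.subset_union_left : R1 ⊆ R1 ∪ R2) t = r1' := by
      funext a
      exact (hts a.1 (Set.subset_union_left a.2) (Or.inl a.2)).trans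
        (tJoin_left r1' r4 a.1 a.2 _)
    rw [hkey] at hj3
    exact hs2 r3 hr3 hj3
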